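/- Let H be self-adjoint and g a C⁴ compactly supported function with g(0) = 1 and g'(0) = 0, and suppose 0 is in the resolvent set of H. Then (I − g(H)) H⁻² = −∫_ℂ (∂_z̄ g̃)(z) z⁻² (H−z)⁻¹ dz dz̄, and hence ‖(I − g(H))H⁻²‖ ≤ |||g|||₄ in the Helffer–Sjöstrand norm. -/

import Mathlib

/-!
Multiply the partial-fraction identity
`z⁻² (H - z)⁻¹ = (H - z)⁻¹ H⁻² + z⁻¹ H⁻² + z⁻² H⁻¹` by `∂_z̄ g̃ (z)` and integrate: the real
axis is Lebesgue-null, so the identity holds almost everywhere, and the conditions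
`∫ (∂_z̄ g̃) z⁻¹ = -1`, `∫ (∂_z̄ g̃) z⁻² = 0` turn the right-hand side into `g(H) H⁻² - H⁻²`.
The norm bound then follows from `‖(H - z)⁻¹‖ ≤ |Im z|⁻¹` and `|Im z| ≤ |z|`.
-/

open MeasureTheory

theorem Complex.ae_im_ne_zero : ∀ᵐ z : ℂ, z.im ≠ 0 := by
  have hker : {z : ℂ | z.im = 0} = (LinearMap.ker Complex.imLm : Set ℂ) := by
    ext z; simp
  rw [ae_iff]
  simp only [ne_eq, not_not]
  rw [hker]
  refine Measure.addHaar_submodule _ _ fun htop => ?_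
  have : Complex.I ∈ LinearMap.ker Complex.imLm := htop ▸ Submodule.mem_top
  simp at this

theorem inv_sq_smul_resolvent_eq {𝕜 A : Type*} [Field 𝕜] [Ring A] [Algebra 𝕜 A]
    {H Hinv R : A} {z : 𝕜} (hz : z ≠ 0) (hHinv : H * Hinv = 1)
    (hRl : R * (H - z • 1) = 1) (hRr : (H - z • 1) * R = 1) :
    (z ^ 2)⁻¹ • R = R * (Hinv * Hinv) + z⁻¹ • (Hinv * Hinv) + (z ^ 2)⁻¹ • Hinv := by
  have hcancel : ∀ X Y : A, (H - z • 1) * X = (H - z • 1) * Y → X = Y := fun X Y h => by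
    simpa [← mul_assoc, hRl] using congrArg (R * ·) h
  apply hcancel
  have hHK : (H - z • 1) * (Hinv * Hinv) = Hinv - z • (Hinv * Hinv) := by
    rw [sub_mul, ← mul_assoc, hHinv, one_mul, smul_one_mul]
  have hHinv' : (H - z • 1) * Hinv = 1 - z • Hinv := by
    rw [sub_mul, hHinv, smul_one_mul]
  rw [mul_smul_comm, hRr, mul_add, mul_add, ← mul_assoc, hRr, one_mul, mul_smul_comm, hHK,
    mul_smul_comm, hHinv', smul_sub, smul_sub, smul_smul, smul_smul, inv_mul_cancel₀ hz,
    one_smul, show (z ^ 2)⁻¹ * z = z⁻¹ by field_simp]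
  abel

theorem integral_div_sq_smul_resolvent_eq {A : Type*} [NormedRing A] [NormedAlgebra ℂ A]
    [CompleteSpace A] {H Hinv : A} {dbar : ℂ → ℂ} {R : ℂ → A}
    (hHinv : H * Hinv = 1)
    (hR : ∀ z : ℂ, z.im ≠ 0 → R z * (H - z • 1) = 1 ∧ (H - z • 1) * R z = 1)
    (hintg : Integrable fun z => dbar z • R z) (hint2 : Integrable fun z => (dbar z / z ^ 2) • R z)
    (hint1 : Integrable fun z => dbar z / z) :
    ∫ z, (dbar z / z ^ 2) • R z = (∫ z, dbar z • R z) * (Hinv * Hinv)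
      + (∫ z, dbar z / z) • (Hinv * Hinv) + (∫ z, dbar z / z ^ 2) • Hinv := by
  set K := Hinv * Hinv
  have hpt : ∀ᵐ z : ℂ, (dbar z / z ^ 2) • R z
      = dbar z • R z * K + (dbar z / z) • K + (dbar z / z ^ 2) • Hinv := by
    filter_upwards [Complex.ae_im_ne_zero] with z hz
    obtain ⟨hRl, hRr⟩ := hR z hz
    have hz0 : z ≠ 0 := fun h => hz (by simp [h])
    simp only [div_eq_mul_inv, mul_smul]
    rw [inv_sq_smul_resolvent_eq hz0 hHinv hRl hRr, smul_mul_assoc, smul_add, smul_add]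
  have hintRK : Integrable fun z => dbar z • R z * K := hintg.mul_const K
  have hint1K : Integrable fun z => (dbar z / z) • K := hint1.smul_const K
  have hint2Hinv : Integrable fun z => (dbar z / z ^ 2) • Hinv := by
    refine ((hint2.sub hintRK).sub hint1K).congr ?_
    filter_upwards [hpt] with z hz
    simp only [Pi.sub_apply, hz]
    abel
  have hintRK1K : Integrable fun z => dbar z • R z * K + (dbar z / z) • K := hintRK.add hint1K
  rw [integral_congr_ae hpt, integral_add hintRK1K hint2Hinv,
    integral_add hintRK hint1K, integral_mul_const_of_integrable hintg, integral_smul_const,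
    integral_smul_const]

theorem norm_div_sq_smul_le {E : Type*} [SeminormedAddCommGroup E] [NormedSpace ℂ E]
    {w z : ℂ} {T : E} (hz : z.im ≠ 0) (hT : ‖T‖ ≤ 1 / |z.im|) :
    ‖(w / z ^ 2) • T‖ ≤ ‖w‖ / |z.im| ^ 3 := by
  have him : 0 < |z.im| := abs_pos.mpr hz
  calc ‖(w / z ^ 2) • T‖ = ‖w‖ / ‖z‖ ^ 2 * ‖T‖ := by rw [norm_smul, norm_div, norm_pow]
    _ ≤ ‖w‖ / |z.im| ^ 2 * (1 / |z.im|) := by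
        gcongr
        exact Complex.abs_im_le_norm z
    _ = ‖w‖ / |z.im| ^ 3 := by ring

theorem norm_integral_div_sq_smul_le {E : Type*} [NormedAddCommGroup E] [NormedSpace ℂ E]
    {dbar : ℂ → ℂ} {R : ℂ → E} (hR : ∀ z : ℂ, z.im ≠ 0 → ‖R z‖ ≤ 1 / |z.im|)
    (hint : Integrable fun z : ℂ => ‖dbar z‖ / |z.im| ^ 3) :
    ‖∫ z, (dbar z / z ^ 2) • R z‖ ≤ ∫ z, ‖dbar z‖ / |z.im| ^ 3 :=
  norm_integral_le_of_norm_le hint <| by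
    filter_upwards [Complex.ae_im_ne_zero] with z hz using norm_div_sq_smul_le hz (hR z hz)

theorem one_sub_gH_times_inv_sq_general
    {𝓗 : Type*} [NormedAddCommGroup 𝓗] [InnerProductSpace ℂ 𝓗] [CompleteSpace 𝓗]
    (H Hinv : 𝓗 →L[ℂ] 𝓗) (N₄ : ℝ)
    (dbar : ℂ → ℂ) (R : ℂ → 𝓗 →L[ℂ] 𝓗)
    -- `0` in the resolvent set: `Hinv = H⁻¹`
    (hHinv2 : H * Hinv = 1)
    -- resolvent data with the self-adjoint bound
    (hR : ∀ z : ℂ, z.im ≠ 0 →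
      R z * (H - z • (1 : 𝓗 →L[ℂ] 𝓗)) = 1 ∧
      (H - z • (1 : 𝓗 →L[ℂ] 𝓗)) * R z = 1 ∧
      ‖R z‖ ≤ 1 / |z.im|)
    -- Helffer–Sjöstrand norm `|||g|||₄`
    (hint : Integrable (fun z : ℂ => ‖dbar z‖ / |z.im| ^ 3))
    (hN₄ : ∫ z : ℂ, ‖dbar z‖ / |z.im| ^ 3 ≤ N₄)
    (hintg : Integrable (fun z : ℂ => dbar z • R z))
    (hint2 : Integrable (fun z : ℂ => (dbar z / z ^ 2) • R z))
    -- `g(0) = 1`, i.e. `∫ (∂_z̄ g̃) z⁻¹ = −1`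
    (hg0 : ∫ z : ℂ, dbar z / z = -1)
    -- `g'(0) = 0`, i.e. `∫ (∂_z̄ g̃) z⁻² = 0`
    (hg'0 : ∫ z : ℂ, dbar z / z ^ 2 = 0) :
    (1 - ∫ z : ℂ, dbar z • R z) * (Hinv * Hinv) =
        -∫ z : ℂ, (dbar z / z ^ 2) • R z ∧
      ‖(1 - ∫ z : ℂ, dbar z • R z) * (Hinv * Hinv)‖ ≤ N₄ := by
  have hint1 : Integrable fun z : ℂ => dbar z / z :=
    Integrable.of_integral_ne_zero (by rw [hg0]; exact neg_ne_zero.mpr one_ne_zero)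
  have hformula := integral_div_sq_smul_resolvent_eq hHinv2
    (fun z hz => ⟨(hR z hz).1, (hR z hz).2.1⟩) hintg hint2 hint1
  rw [hg0, hg'0, neg_one_smul, zero_smul, add_zero] at hformula
  have hidentity : (1 - ∫ z : ℂ, dbar z • R z) * (Hinv * Hinv) =
      -∫ z : ℂ, (dbar z / z ^ 2) • R z := by
    rw [hformula, sub_mul, one_mul]
    abel
  refine ⟨hidentity, ?_⟩
  rw [hidentity, norm_neg]
  exact (norm_integral_div_sq_smul_le (fun z hz => (hR z hz).2.2) hint).trans hN₄

/-- For self-adjoint invertible `H` and a `C⁴` compactly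
supported `g` with `g(0) = 1`, `g'(0) = 0` (expressed through the almost
analytic extension), `(I − g(H))H⁻² = −∫_ℂ (∂_z̄ g̃)(z) z⁻² (H−z)⁻¹ dz dz̄`,
whence `‖(I − g(H))H⁻²‖ ≤ |||g|||₄`. -/
theorem one_sub_gH_times_inv_sq
    {𝓗 : Type*} [NormedAddCommGroup 𝓗] [InnerProductSpace ℂ 𝓗] [CompleteSpace 𝓗]
    (H Hinv : 𝓗 →L[ℂ] 𝓗) (N₄ : ℝ)
    (dbar : ℂ → ℂ) (R : ℂ → 𝓗 →L[ℂ] 𝓗)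
    (hH : IsSelfAdjoint H)
    -- `0` in the resolvent set: `Hinv = H⁻¹`
    (hHinv1 : Hinv * H = 1) (hHinv2 : H * Hinv = 1)
    -- resolvent data with the self-adjoint bound
    (hR : ∀ z : ℂ, z.im ≠ 0 →
      R z * (H - z • (1 : 𝓗 →L[ℂ] 𝓗)) = 1 ∧
      (H - z • (1 : 𝓗 →L[ℂ] 𝓗)) * R z = 1 ∧
      ‖R z‖ ≤ 1 / |z.im|)
    -- Helffer–Sjöstrand norm `|||g|||₄`
    (hint : Integrable (fun z : ℂ => ‖dbar z‖ / |z.im| ^ 3))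
    (hN₄ : ∫ z : ℂ, ‖dbar z‖ / |z.im| ^ 3 ≤ N₄)
    (hintg : Integrable (fun z : ℂ => dbar z • R z))
    (hint2 : Integrable (fun z : ℂ => (dbar z / z ^ 2) • R z))
    -- `g(0) = 1`, i.e. `∫ (∂_z̄ g̃) z⁻¹ = −1`
    (hg0 : ∫ z : ℂ, dbar z / z = -1)
    -- `g'(0) = 0`, i.e. `∫ (∂_z̄ g̃) z⁻² = 0`
    (hg'0 : ∫ z : ℂ, dbar z / z ^ 2 = 0) :
    (1 - ∫ z : ℂ, dbar z • R z) * (Hinv * Hinv) =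
        -∫ z : ℂ, (dbar z / z ^ 2) • R z ∧
      ‖(1 - ∫ z : ℂ, dbar z • R z) * (Hinv * Hinv)‖ ≤ N₄ :=
  one_sub_gH_times_inv_sq_general H Hinv N₄ dbar R hHinv2 hR hint hN₄ hintg hint2 hg0 hg'0
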